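/- arXiv:1106.2845 — 2 statements merged into one kernel-verified Lean document; each statement's English description precedes it below -/
import Mathlib

section
/- Let 0 < α ≤ 1 and let A : 𝓑 → ℝ be α-Hölder. Suppose ψ₁, ψ₂ : 𝓑 → ℝ are continuous functions, each bounded below by a strictly positive constant, satisfying L_A ψ₁ = λ₁ ψ₁ and L_A ψ₂ = λ₂ ψ₂ for some real numbers λ₁, λ₂. Then λ₁ = λ₂ and there is a constant t > 0 with ψ₁ = t·ψ₂. In other words, the strictly positive continuous eigenfunction of the Ruelle operator L_A is unique up to a positive scalar multiple, and its eigenvalue is uniquely determined. -/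
open MeasureTheory Filter Topology

noncomputable section

instance : Fact (0 < 2 * Real.pi) := ⟨by positivity⟩

/-- The circle `M = ℝ/2πℤ` with arc-length metric. -/
abbrev Circ : Type := AddCircle (2 * Real.pi)

/-- The normalized Haar (Lebesgue) probability measure on the circle. -/
def haarC : Measure Circ := AddCircle.haarAddCircle

/-- The Bernoulli space `𝓑 = M^ℕ`. -/
abbrev Bs : Type := ℕ → Circ

/-- The left shift `σ`. -/
def shift (x : Bs) : Bs := fun n => x (n + 1)

/-- Prepending a symbol: `cons a x = ax = (a, x₀, x₁, …)`. -/
def cons (a : Circ) (x : Bs) : Bs := fun n =>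
  match n with
  | 0 => a
  | k + 1 => x k

/-- The metric `d(x,y) = Σ_k 2^{-k} d_M(x_k, y_k)` on `𝓑`. -/
def dB (x y : Bs) : ℝ := ∑' k : ℕ, (1 / 2 : ℝ) ^ k * dist (x k) (y k)

/-- `A` is α-Hölder with constant `H` for the metric `dB`. -/
def IsHolderB (α H : ℝ) (A : Bs → ℝ) : Prop := ∀ x y, |A x - A y| ≤ H * dB x y ^ α

/-- The Ruelle operator `L_A ψ (x) = ∫_M e^{A(ax)} ψ(ax) da`. -/
def Ruelle (A : Bs → ℝ) (ψ : Bs → ℝ) : Bs → ℝ :=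
  fun x => ∫ a, Real.exp (A (cons a x)) * ψ (cons a x) ∂haarC

instance : IsProbabilityMeasure haarC := by unfold haarC; infer_instance
instance : haarC.IsOpenPosMeasure := by unfold haarC; infer_instance

lemma continuous_cons (x : Bs) : Continuous (fun a => cons a x) := by
  apply continuous_pi
  intro n
  match n with
  | 0 => exact continuous_id
  | k + 1 => exact continuous_const

lemma dB_cons (a b : Circ) (x : Bs) : dB (cons a x) (cons b x) = dist a b := by
  unfold dB
  rw [tsum_eq_single 0]
  · simp [cons]
  · intro k hk
    match k with
    | 0 => exact absurd rfl hk
    | k + 1 => simp [cons]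

lemma contA {α H : ℝ} (hα0 : 0 < α) {A : Bs → ℝ} (hA : IsHolderB α H A) (x : Bs) :
    Continuous (fun a => A (cons a x)) := by
  rw [continuous_iff_continuousAt]
  intro b
  rw [ContinuousAt, tendsto_iff_dist_tendsto_zero]
  have hb : ∀ a : Circ, dist (A (cons a x)) (A (cons b x)) ≤ (max H 0) * dist a b ^ α := by
    intro a
    calc dist (A (cons a x)) (A (cons b x)) = |A (cons a x) - A (cons b x)| := rfl
    _ ≤ H * dB (cons a x) (cons b x) ^ α := hA _ _
    _ ≤ (max H 0) * dist a b ^ α := by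
        rw [dB_cons]
        exact mul_le_mul_of_nonneg_right (le_max_left _ _) (Real.rpow_nonneg dist_nonneg _)
  have h2 : Tendsto (fun a : Circ => (max H 0) * dist a b ^ α) (𝓝 b) (𝓝 0) := by
    have hd : Tendsto (fun a : Circ => dist a b) (𝓝 b) (𝓝 0) := by
      simpa using (continuous_id.dist (continuous_const : Continuous fun _ : Circ => b)).tendsto b
    have hr : Tendsto (fun a : Circ => dist a b ^ α) (𝓝 b) (𝓝 0) := by
      have := (Real.continuousAt_rpow_const 0 α (Or.inr hα0.le)).tendsto
      rw [Real.zero_rpow hα0.ne'] at this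
      exact this.comp hd
    simpa using hr.const_mul (max H 0)
  exact squeeze_zero (fun a => dist_nonneg) hb h2

lemma cont_integrand {α H : ℝ} (hα0 : 0 < α) {A : Bs → ℝ} (hA : IsHolderB α H A)
    {ψ : Bs → ℝ} (hψ : Continuous ψ) (x : Bs) :
    Continuous (fun a => Real.exp (A (cons a x)) * ψ (cons a x)) :=
  ((Real.continuous_exp.comp (contA hα0 hA x))).mul (hψ.comp (continuous_cons x))

lemma integ {α H : ℝ} (hα0 : 0 < α) {A : Bs → ℝ} (hA : IsHolderB α H A)
    {ψ : Bs → ℝ} (hψ : Continuous ψ) (x : Bs) :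
    Integrable (fun a => Real.exp (A (cons a x)) * ψ (cons a x)) haarC :=
  (cont_integrand hα0 hA hψ x).integrable_of_hasCompactSupport
    (HasCompactSupport.of_compactSpace _)

lemma Rmono {α H : ℝ} (hα0 : 0 < α) {A : Bs → ℝ} (hA : IsHolderB α H A)
    {u v : Bs → ℝ} (hu : Continuous u) (hv : Continuous v) (huv : ∀ y, u y ≤ v y) (x : Bs) :
    Ruelle A u x ≤ Ruelle A v x := by
  apply integral_mono (integ hα0 hA hu x) (integ hα0 hA hv x)
  intro a
  exact mul_le_mul_of_nonneg_left (huv _) (Real.exp_pos _).le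

lemma Rsmul {A : Bs → ℝ} (c : ℝ) (ψ : Bs → ℝ) (x : Bs) :
    Ruelle A (fun y => c * ψ y) x = c * Ruelle A ψ x := by
  unfold Ruelle
  rw [← integral_const_mul]
  congr 1; funext a; ring

lemma Rsub {α H : ℝ} (hα0 : 0 < α) {A : Bs → ℝ} (hA : IsHolderB α H A)
    {u v : Bs → ℝ} (hu : Continuous u) (hv : Continuous v) (x : Bs) :
    Ruelle A (fun y => u y - v y) x = Ruelle A u x - Ruelle A v x := by
  unfold Ruelle
  rw [← integral_sub (integ hα0 hA hu x) (integ hα0 hA hv x)]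
  congr 1; funext a; ring

lemma Rpos {α H : ℝ} (hα0 : 0 < α) {A : Bs → ℝ} (hA : IsHolderB α H A)
    {ψ : Bs → ℝ} (hψ : Continuous ψ) {c : ℝ} (hc : 0 < c) (hl : ∀ y, c ≤ ψ y) (x : Bs) :
    0 < Ruelle A ψ x := by
  obtain ⟨a₀, -, ha₀'⟩ := isCompact_univ.exists_isMinOn (Set.univ_nonempty)
    ((contA hα0 hA x).continuousOn (s := Set.univ))
  have ha₀ : ∀ a : Circ, A (cons a₀ x) ≤ A (cons a x) := fun a => ha₀' (Set.mem_univ a)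
  set m := Real.exp (A (cons a₀ x)) * c with hm
  have hmpos : 0 < m := mul_pos (Real.exp_pos _) hc
  have hub : ∀ a : Circ, m ≤ Real.exp (A (cons a x)) * ψ (cons a x) := by
    intro a
    exact mul_le_mul (Real.exp_le_exp.mpr (ha₀ a)) (hl _) hc.le (Real.exp_pos _).le
  calc (0:ℝ) < m := hmpos
  _ = ∫ _ : Circ, m ∂haarC := by simp
  _ ≤ Ruelle A ψ x := integral_mono (integrable_const m) (integ hα0 hA hψ x) hub

lemma pow_le_lam {l1 l2 K1 K2 : ℝ} (hl2 : 0 < l2) (hK1 : 0 < K1)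
    (h : ∀ n : ℕ, l1 ^ n * K1 ≤ l2 ^ n * K2) : l1 ≤ l2 := by
  by_contra hlt
  push_neg at hlt
  have hl1 : 0 < l1 := lt_trans hl2 hlt
  have hr : 1 < l1 / l2 := (one_lt_div hl2).mpr hlt
  obtain ⟨n, hn⟩ := pow_unbounded_of_one_lt (K2 / K1) hr
  have : (l1 / l2) ^ n ≤ K2 / K1 := by
    rw [div_pow, div_le_div_iff₀ (pow_pos hl2 n) hK1]
    linarith [h n]
  linarith

lemma eig_le {α H : ℝ} (hα0 : 0 < α) {A : Bs → ℝ} (hA : IsHolderB α H A)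
    (ψ₁ ψ₂ : Bs → ℝ) (h₁c : Continuous ψ₁) (h₂c : Continuous ψ₂)
    (h₁pos : ∃ c > 0, ∀ x, c ≤ ψ₁ x) (h₂pos : ∃ c > 0, ∀ x, c ≤ ψ₂ x)
    (lam₁ lam₂ : ℝ)
    (h₁ : ∀ x, Ruelle A ψ₁ x = lam₁ * ψ₁ x)
    (h₂ : ∀ x, Ruelle A ψ₂ x = lam₂ * ψ₂ x) : lam₁ ≤ lam₂ := by
  obtain ⟨c₁, hc₁, hl₁⟩ := h₁pos
  obtain ⟨c₂, hc₂, hl₂⟩ := h₂pos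
  have x0 : Bs := fun _ => 0
  have hψ₁0 : 0 < ψ₁ x0 := lt_of_lt_of_le hc₁ (hl₁ x0)
  have hψ₂0 : 0 < ψ₂ x0 := lt_of_lt_of_le hc₂ (hl₂ x0)
  have hlam₂ : 0 < lam₂ := by
    have hp := Rpos hα0 hA h₂c hc₂ hl₂ x0
    rw [h₂ x0] at hp
    nlinarith
  -- max of ψ₁
  obtain ⟨x1, -, hx1'⟩ := isCompact_univ.exists_isMaxOn Set.univ_nonempty
    (h₁c.continuousOn (s := Set.univ))
  have hx1 : ∀ y, ψ₁ y ≤ ψ₁ x1 := fun y => hx1' (Set.mem_univ y)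
  set M : ℝ := ψ₁ x1 / c₂ with hMdef
  have hMpos : 0 < M := div_pos (lt_of_lt_of_le hc₁ (hl₁ x1)) hc₂
  have hM : ∀ y, ψ₁ y ≤ M * ψ₂ y := by
    intro y
    calc ψ₁ y ≤ ψ₁ x1 := hx1 y
    _ = M * c₂ := by rw [hMdef, div_mul_cancel₀ _ hc₂.ne']
    _ ≤ M * ψ₂ y := mul_le_mul_of_nonneg_left (hl₂ y) hMpos.le
  have claim : ∀ n : ℕ, ∀ x, lam₁ ^ n * ψ₁ x ≤ lam₂ ^ n * (M * ψ₂ x) := by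
    intro n
    induction n with
    | zero => intro x; simpa using hM x
    | succ n ih =>
      intro x
      have hcont1 : Continuous (fun y => lam₁ ^ n * ψ₁ y) := continuous_const.mul h₁c
      have hcont2 : Continuous (fun y => (lam₂ ^ n * M) * ψ₂ y) := continuous_const.mul h₂c
      calc lam₁ ^ (n + 1) * ψ₁ x = lam₁ ^ n * (lam₁ * ψ₁ x) := by ring
      _ = lam₁ ^ n * Ruelle A ψ₁ x := by rw [h₁ x]
      _ = Ruelle A (fun y => lam₁ ^ n * ψ₁ y) x := (Rsmul _ _ _).symm
      _ ≤ Ruelle A (fun y => (lam₂ ^ n * M) * ψ₂ y) x := by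
          apply Rmono hα0 hA hcont1 hcont2
          intro y
          have := ih y
          nlinarith [ih y]
      _ = (lam₂ ^ n * M) * Ruelle A ψ₂ x := Rsmul _ _ _
      _ = (lam₂ ^ n * M) * (lam₂ * ψ₂ x) := by rw [h₂ x]
      _ = lam₂ ^ (n + 1) * (M * ψ₂ x) := by ring
  exact pow_le_lam hlam₂ hψ₁0 (fun n => claim n x0)

/-- uniqueness (up to a positive scalar) of the strictly positive
continuous eigenfunction of the Ruelle operator, and uniqueness of its eigenvalue. -/
theorem eigenfunction_unique (α H : ℝ) (hα0 : 0 < α) (hα1 : α ≤ 1)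
    (A : Bs → ℝ) (hA : IsHolderB α H A)
    (ψ₁ ψ₂ : Bs → ℝ) (h₁c : Continuous ψ₁) (h₂c : Continuous ψ₂)
    (h₁pos : ∃ c > 0, ∀ x, c ≤ ψ₁ x) (h₂pos : ∃ c > 0, ∀ x, c ≤ ψ₂ x)
    (lam₁ lam₂ : ℝ)
    (h₁ : ∀ x, Ruelle A ψ₁ x = lam₁ * ψ₁ x)
    (h₂ : ∀ x, Ruelle A ψ₂ x = lam₂ * ψ₂ x) :
    lam₁ = lam₂ ∧ ∃ t > 0, ∀ x, ψ₁ x = t * ψ₂ x := by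
  have hlam : lam₁ = lam₂ :=
    le_antisymm (eig_le hα0 hA ψ₁ ψ₂ h₁c h₂c h₁pos h₂pos lam₁ lam₂ h₁ h₂)
      (eig_le hα0 hA ψ₂ ψ₁ h₂c h₁c h₂pos h₁pos lam₂ lam₁ h₂ h₁)
  refine ⟨hlam, ?_⟩
  obtain ⟨c₁, hc₁, hl₁⟩ := h₁pos
  obtain ⟨c₂, hc₂, hl₂⟩ := h₂pos
  have hψ₂pos : ∀ y, 0 < ψ₂ y := fun y => lt_of_lt_of_le hc₂ (hl₂ y)
  have hψ₁pos : ∀ y, 0 < ψ₁ y := fun y => lt_of_lt_of_le hc₁ (hl₁ y)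
  -- minimum of the ratio
  have hrc : Continuous (fun y => ψ₁ y / ψ₂ y) := h₁c.div h₂c (fun y => (hψ₂pos y).ne')
  obtain ⟨xs, -, hxs'⟩ := isCompact_univ.exists_isMinOn Set.univ_nonempty
    (hrc.continuousOn (s := Set.univ))
  have hxs : ∀ y, ψ₁ xs / ψ₂ xs ≤ ψ₁ y / ψ₂ y := fun y => hxs' (Set.mem_univ y)
  set t : ℝ := ψ₁ xs / ψ₂ xs with htdef
  have htpos : 0 < t := div_pos (hψ₁pos xs) (hψ₂pos xs)
  set φ : Bs → ℝ := fun y => ψ₁ y - t * ψ₂ y with hφdef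
  have hφc : Continuous φ := h₁c.sub (continuous_const.mul h₂c)
  have hφnn : ∀ y, 0 ≤ φ y := by
    intro y
    have := hxs y
    have h' : t * ψ₂ y ≤ ψ₁ y := by
      rw [← le_div_iff₀ (hψ₂pos y)]
      exact this
    simp [hφdef]; linarith
  have hφxs : φ xs = 0 := by
    simp only [hφdef, htdef]
    rw [div_mul_cancel₀ _ (hψ₂pos xs).ne']
    ring
  have hφeig : ∀ x, Ruelle A φ x = lam₁ * φ x := by
    intro x
    have : Ruelle A φ x = Ruelle A ψ₁ x - Ruelle A (fun y => t * ψ₂ y) x :=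
      Rsub hα0 hA h₁c (continuous_const.mul h₂c) x
    rw [this, Rsmul, h₁ x, h₂ x, ← hlam]
    ring
  -- zero set is closed under cons
  have hZcons : ∀ x, φ x = 0 → ∀ a, φ (cons a x) = 0 := by
    intro x hx a
    have hint : ∫ b, Real.exp (A (cons b x)) * φ (cons b x) ∂haarC = 0 := by
      have := hφeig x
      rw [hx, mul_zero] at this
      exact this
    have hg : Continuous (fun b => Real.exp (A (cons b x)) * φ (cons b x)) :=
      cont_integrand hα0 hA hφc x
    have hgn : ∀ b, 0 ≤ Real.exp (A (cons b x)) * φ (cons b x) :=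
      fun b => mul_nonneg (Real.exp_pos _).le (hφnn _)
    have hae := (integral_eq_zero_iff_of_nonneg hgn
      (hg.integrable_of_hasCompactSupport (HasCompactSupport.of_compactSpace _))).mp hint
    have hzero : (fun b => Real.exp (A (cons b x)) * φ (cons b x)) = (fun _ => 0) := by
      exact (Continuous.ae_eq_iff_eq haarC hg continuous_const).mp hae
    have := congrFun hzero a
    have hexp := (Real.exp_pos (A (cons a x))).ne'
    exact (mul_eq_zero.mp this).resolve_left hexp
  -- finite prefixes
  have key : ∀ n : ℕ, ∀ y x : Bs, φ x = 0 →
      φ (fun k => if k < n then y k else x (k - n)) = 0 := by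
    intro n
    induction n with
    | zero =>
      intro y x hx
      have : (fun k => if k < 0 then y k else x (k - 0)) = x := by
        funext k; simp
      rw [this]; exact hx
    | succ n ih =>
      intro y x hx
      have hfun : (fun k => if k < n + 1 then y k else x (k - (n + 1)))
          = cons (y 0) (fun k => if k < n then (shift y) k else x (k - n)) := by
        funext k
        match k with
        | 0 => simp [cons]
        | k + 1 => simp [cons, shift, Nat.succ_lt_succ_iff, Nat.succ_sub_succ]
      rw [hfun]
      exact hZcons _ (ih (shift y) x hx) (y 0)
  -- density: φ vanishes everywhere
  have hφzero : ∀ y, φ y = 0 := by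
    intro y
    set z : ℕ → Bs := fun n => fun k => if k < n then y k else xs (k - n) with hzdef
    have hz : Tendsto z atTop (𝓝 y) := by
      rw [tendsto_pi_nhds]
      intro k
      apply Tendsto.congr' _ (tendsto_const_nhds (x := y k))
      filter_upwards [eventually_ge_atTop (k + 1)] with n hn
      simp [hzdef, Nat.lt_of_lt_of_le (Nat.lt_succ_self k) hn]
    have hφz : ∀ n, φ (z n) = 0 := fun n => key n y xs hφxs
    have h1 : Tendsto (fun n => φ (z n)) atTop (𝓝 (φ y)) := (hφc.tendsto y).comp hz
    have h2 : Tendsto (fun n => φ (z n)) atTop (𝓝 0) := by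
      simp only [hφz]; exact tendsto_const_nhds
    exact tendsto_nhds_unique h1 h2
  exact ⟨t, htpos, fun x => by have := hφzero x; simp [hφdef] at this; linarith⟩
end
end

section
/- Let 0 < α ≤ 1, let Ā : 𝓑 → ℝ be α-Hölder and normalized, and let m be the unique Borel probability measure on 𝓑 fixed by the dual Ruelle operator L_Ā^*. Then for every α-Hölder function ω : 𝓑 → ℝ, the iterates L_Ā^n(ω) converge uniformly on 𝓑, as n → ∞, to the constant function ∫ ω dm. -/
/-!
Normalization makes `L_A` a Markov operator: it fixes constants, is monotone and preserves
`∫ · dm`, so `∫ ω dm` lies between `inf L^n ω` and `sup L^n ω`, and it suffices that the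
oscillation of `L^n ω` tends to `0`. The Lasota–Yorke inequality
`|L ψ|_α ≤ 2^{-α} |ψ|_α + K ‖ψ‖_∞` keeps all iterates `S`-Hölder for one `S`. Since `e^A ≥ δ > 0`,
`L^k` gives every point mass at least `p = (δ · haar(ball η))^k` on each `k`-cylinder of radius
`η`, on which an `S`-Hölder function varies by at most `S r^α`. This Doeblin bound gives
`osc L^{n+k} ω ≤ (1 - p) osc L^n ω + p S r^α`, and letting `r → 0` forces the oscillation to `0`.
-/


open MeasureTheory Filter Topology

noncomputable section

/-- `A` is normalized: `∫_M e^{A(ax)} da = 1` for all `x`. -/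
def NormalizedB (A : Bs → ℝ) : Prop := ∀ x, ∫ a, Real.exp (A (cons a x)) ∂haarC = 1

/-- `m` is a fixed point of the dual Ruelle operator `L_A^*`. -/
def FixedDual (A : Bs → ℝ) (m : Measure Bs) : Prop :=
  ∀ ψ : Bs → ℝ, Continuous ψ → (∃ C, ∀ x, |ψ x| ≤ C) →
    ∫ x, Ruelle A ψ x ∂m = ∫ x, ψ x ∂m

open Metric

theorem dist_le_pi (u v : Circ) : dist u v ≤ Real.pi := by
  have := AddCircle.norm_le_half_period (p := 2 * Real.pi) (x := u - v) (by positivity)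
  rwa [← dist_eq_norm, abs_of_pos (by positivity), mul_div_cancel_left₀ _ two_ne_zero] at this

theorem summable_geometric_half_mul_pi : Summable fun k : ℕ => (1 / 2 : ℝ) ^ k * Real.pi :=
  (summable_geometric_of_lt_one (by norm_num) (by norm_num)).mul_right _

theorem tsum_geometric_half_mul_pi : ∑' k : ℕ, (1 / 2 : ℝ) ^ k * Real.pi = 2 * Real.pi := by
  rw [tsum_mul_right, tsum_geometric_of_lt_one (by norm_num) (by norm_num)]
  norm_num

theorem summable_dB (x y : Bs) : Summable fun k => (1 / 2 : ℝ) ^ k * dist (x k) (y k) :=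
  summable_geometric_half_mul_pi.of_nonneg_of_le (fun _ => by positivity)
    fun _ => mul_le_mul_of_nonneg_left (dist_le_pi _ _) (by positivity)

theorem dB_nonneg (x y : Bs) : 0 ≤ dB x y :=
  tsum_nonneg fun _ => by positivity

theorem dB_self (x : Bs) : dB x x = 0 := by
  simp [dB]

theorem continuous_dB : Continuous fun p : Bs × Bs => dB p.1 p.2 :=
  continuous_tsum (fun k => continuous_const.mul (by fun_prop)) summable_geometric_half_mul_pi
    fun k p => by
      rw [Real.norm_of_nonneg (by positivity)]
      exact mul_le_mul_of_nonneg_left (dist_le_pi _ _) (by positivity)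

theorem dB_cons_cons (a : Circ) (x y : Bs) : dB (cons a x) (cons a y) = 1 / 2 * dB x y := by
  rw [dB, (summable_dB _ _).tsum_eq_zero_add, dB, ← tsum_mul_left]
  simp only [cons, dist_self, mul_zero, zero_add, pow_succ]
  congr 1; ext k; ring

theorem dB_le_of_forall_lt_dist_le {k : ℕ} {η : ℝ} (hη : 0 ≤ η) {y z : Bs}
    (h : ∀ j < k, dist (y j) (z j) ≤ η) : dB y z ≤ 2 * η + (1 / 2 : ℝ) ^ k * (2 * Real.pi) := by
  have head : ∑ j ∈ Finset.range k, (1 / 2 : ℝ) ^ j * dist (y j) (z j) ≤ 2 * η :=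
    calc ∑ j ∈ Finset.range k, (1 / 2 : ℝ) ^ j * dist (y j) (z j)
        ≤ ∑ j ∈ Finset.range k, (1 / 2 : ℝ) ^ j * η :=
          Finset.sum_le_sum fun j hj =>
            mul_le_mul_of_nonneg_left (h j (Finset.mem_range.mp hj)) (by positivity)
      _ = (∑ j ∈ Finset.range k, (1 / 2 : ℝ) ^ j) * η := (Finset.sum_mul ..).symm
      _ ≤ 2 * η := mul_le_mul_of_nonneg_right (sum_geometric_two_le k) hη
  have tail : ∑' j, (1 / 2 : ℝ) ^ (j + k) * dist (y (j + k)) (z (j + k))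
      ≤ (1 / 2 : ℝ) ^ k * (2 * Real.pi) :=
    calc ∑' j, (1 / 2 : ℝ) ^ (j + k) * dist (y (j + k)) (z (j + k))
        ≤ ∑' j, (1 / 2 : ℝ) ^ k * ((1 / 2 : ℝ) ^ j * Real.pi) :=
          ((summable_nat_add_iff k).mpr (summable_dB y z)).tsum_le_tsum
            (fun j => by
              rw [pow_add, mul_comm ((1 / 2 : ℝ) ^ j), mul_assoc]
              gcongr
              exact dist_le_pi _ _)
            (summable_geometric_half_mul_pi.mul_left _)
      _ = (1 / 2 : ℝ) ^ k * (2 * Real.pi) := by rw [tsum_mul_left, tsum_geometric_half_mul_pi]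
  rw [dB, ← (summable_dB y z).sum_add_tsum_nat_add k]
  exact add_le_add head tail

theorem exists_dB_le_of_forall_lt_dist_le {r : ℝ} (hr : 0 < r) :
    ∃ k : ℕ, ∃ η > 0, ∀ y z : Bs, (∀ j < k, dist (y j) (z j) ≤ η) → dB y z ≤ r := by
  obtain ⟨k, hk⟩ := exists_pow_lt_of_lt_one
    (show 0 < r / 2 / (2 * Real.pi) by positivity) (show (1 / 2 : ℝ) < 1 by norm_num)
  rw [lt_div_iff₀ (by positivity)] at hk
  refine ⟨k, r / 4, by positivity, fun y z h => ?_⟩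
  linarith [dB_le_of_forall_lt_dist_le (by positivity : (0 : ℝ) ≤ r / 4) h]

theorem exists_forall_abs_le {f : Bs → ℝ} (hf : Continuous f) : ∃ M, ∀ x, |f x| ≤ M := by
  obtain ⟨M, hM⟩ := isCompact_univ.exists_bound_of_continuousOn hf.continuousOn
  exact ⟨M, fun x => hM x (Set.mem_univ x)⟩

namespace IsHolderB

variable {α H : ℝ} {f : Bs → ℝ}

theorem mono (hf : IsHolderB α H f) {H' : ℝ} (hH : H ≤ H') : IsHolderB α H' f := fun x y =>
  (hf x y).trans (mul_le_mul_of_nonneg_right hH (Real.rpow_nonneg (dB_nonneg x y) α))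

protected theorem continuous (hα : 0 < α) (hf : IsHolderB α H f) : Continuous f := by
  refine continuous_iff_continuousAt.2 fun x => tendsto_iff_dist_tendsto_zero.2 ?_
  have hdB : Tendsto (fun y => dB y x) (𝓝 x) (𝓝 0) := by
    have hc : Continuous fun y : Bs => (y, x) := continuous_id.prodMk continuous_const
    simpa [Function.comp_def, dB_self] using (continuous_dB.comp hc).tendsto x
  have hbound : Tendsto (fun y => H * dB y x ^ α) (𝓝 x) (𝓝 0) := by
    simpa [Real.zero_rpow hα.ne'] using (hdB.rpow_const (Or.inr hα.le)).const_mul H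
  exact squeeze_zero (fun _ => dist_nonneg) (fun y => (Real.dist_eq _ _).trans_le (hf y x)) hbound

theorem abs_sub_cons_le (hf : IsHolderB α H f) (a : Circ) (x y : Bs) :
    |f (cons a x) - f (cons a y)| ≤ H * ((1 / 2 : ℝ) ^ α * dB x y ^ α) := by
  have h := hf (cons a x) (cons a y)
  rwa [dB_cons_cons, Real.mul_rpow (by norm_num) (dB_nonneg x y)] at h

end IsHolderB

instance : Measure.IsAddHaarMeasure haarC := by unfold haarC; infer_instance

instance inst_s6 : IsProbabilityMeasure haarC := by unfold haarC; infer_instance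

theorem continuous_uncurry_cons : Continuous fun p : Circ × Bs => cons p.1 p.2 :=
  continuous_pi fun n => by
    cases n with
    | zero => exact continuous_fst
    | succ k => exact (continuous_apply k).comp continuous_snd

section Ruelle

variable {A : Bs → ℝ}

theorem integrable_exp_mul_comp_cons (hA : Continuous A) {ψ : Bs → ℝ} (hψ : Continuous ψ)
    (x : Bs) : Integrable (fun a => Real.exp (A (cons a x)) * ψ (cons a x)) haarC := by
  have hcons : Continuous fun a => cons a x :=
    continuous_uncurry_cons.comp (continuous_id.prodMk continuous_const)
  exact ((hA.comp hcons).rexp.mul (hψ.comp hcons)).integrable_of_hasCompactSupport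
    (.of_compactSpace _)

theorem continuous_ruelle (hA : Continuous A) {ψ : Bs → ℝ} (hψ : Continuous ψ) :
    Continuous (Ruelle A ψ) := by
  have hcons : Continuous fun p : Bs × Circ => cons p.2 p.1 :=
    continuous_uncurry_cons.comp continuous_swap
  have h := continuous_parametric_integral_of_continuous (μ := haarC)
    (f := fun x a => Real.exp (A (cons a x)) * ψ (cons a x))
    ((hA.comp hcons).rexp.mul (hψ.comp hcons)) isCompact_univ
  rwa [Measure.restrict_univ] at h

theorem continuous_iterate_ruelle (hA : Continuous A) {ψ : Bs → ℝ} (hψ : Continuous ψ) (n : ℕ) :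
    Continuous ((Ruelle A)^[n] ψ) := by
  induction n with
  | zero => exact hψ
  | succ n ih => rw [Function.iterate_succ_apply']; exact continuous_ruelle hA ih

theorem ruelle_nonneg {φ : Bs → ℝ} (hφ : ∀ y, 0 ≤ φ y) (x : Bs) : 0 ≤ Ruelle A φ x :=
  integral_nonneg fun _ => mul_nonneg (Real.exp_pos _).le (hφ _)

theorem ruelle_mono (hA : Continuous A) {φ ψ : Bs → ℝ} (hφ : Continuous φ) (hψ : Continuous ψ)
    (h : ∀ y, φ y ≤ ψ y) (x : Bs) : Ruelle A φ x ≤ Ruelle A ψ x :=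
  integral_mono (integrable_exp_mul_comp_cons hA hφ x) (integrable_exp_mul_comp_cons hA hψ x)
    fun _ => mul_le_mul_of_nonneg_left (h _) (Real.exp_pos _).le

theorem ruelle_const (hnorm : NormalizedB A) (c : ℝ) : Ruelle A (fun _ => c) = fun _ => c :=
  funext fun x => by simp only [Ruelle, integral_mul_const, hnorm x, one_mul]

theorem ruelle_le_of_forall_le (hA : Continuous A) (hnorm : NormalizedB A) {ψ : Bs → ℝ}
    (hψ : Continuous ψ) {s : ℝ} (hs : ∀ y, ψ y ≤ s) (x : Bs) : Ruelle A ψ x ≤ s :=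
  (ruelle_mono hA hψ continuous_const hs x).trans_eq (congrFun (ruelle_const hnorm s) x)

theorem le_ruelle_of_forall_le (hA : Continuous A) (hnorm : NormalizedB A) {ψ : Bs → ℝ}
    (hψ : Continuous ψ) {s : ℝ} (hs : ∀ y, s ≤ ψ y) (x : Bs) : s ≤ Ruelle A ψ x :=
  (congrFun (ruelle_const hnorm s) x).symm.trans_le (ruelle_mono hA continuous_const hψ hs x)

theorem iterate_ruelle_mem_Icc (hA : Continuous A) (hnorm : NormalizedB A) {ψ : Bs → ℝ}
    (hψ : Continuous ψ) {a b : ℝ} (hab : ∀ y, ψ y ∈ Set.Icc a b) (n : ℕ) (x : Bs) :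
    (Ruelle A)^[n] ψ x ∈ Set.Icc a b := by
  induction n generalizing x with
  | zero => exact hab x
  | succ n ih =>
    have hc := continuous_iterate_ruelle hA hψ n
    rw [Function.iterate_succ_apply']
    exact ⟨le_ruelle_of_forall_le hA hnorm hc (fun y => (ih y).1) x,
      ruelle_le_of_forall_le hA hnorm hc (fun y => (ih y).2) x⟩

theorem iterate_ruelle_const_sub (hA : Continuous A) (hnorm : NormalizedB A) {ψ : Bs → ℝ}
    (hψ : Continuous ψ) (c : ℝ) (n : ℕ) :
    (Ruelle A)^[n] (fun y => c - ψ y) = fun x => c - (Ruelle A)^[n] ψ x := by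
  induction n with
  | zero => rfl
  | succ n ih =>
    rw [Function.iterate_succ_apply', ih, Function.iterate_succ_apply']
    funext x
    have hc := continuous_iterate_ruelle hA hψ n
    simp only [Ruelle, mul_sub]
    rw [integral_sub (integrable_exp_mul_comp_cons hA continuous_const x)
      (integrable_exp_mul_comp_cons hA hc x), integral_mul_const, hnorm x, one_mul]

theorem integral_iterate_ruelle (hA : Continuous A) {m : Measure Bs} (hfix : FixedDual A m)
    {ψ : Bs → ℝ} (hψ : Continuous ψ) (n : ℕ) :
    ∫ x, (Ruelle A)^[n] ψ x ∂m = ∫ x, ψ x ∂m := by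
  induction n with
  | zero => rfl
  | succ n ih =>
    have hc := continuous_iterate_ruelle hA hψ n
    rw [Function.iterate_succ_apply', hfix _ hc (exists_forall_abs_le hc), ih]

end Ruelle

theorem abs_exp_sub_exp_le {s t c : ℝ} (hs : s ≤ c) (ht : t ≤ c) :
    |Real.exp s - Real.exp t| ≤ Real.exp c * |s - t| := by
  wlog hts : t ≤ s generalizing s t
  · rw [abs_sub_comm, abs_sub_comm s]
    exact this ht hs (le_of_not_ge hts)
  rw [abs_of_nonneg (sub_nonneg.2 (Real.exp_le_exp.2 hts)), abs_of_nonneg (sub_nonneg.2 hts)]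
  have hexp : Real.exp t = Real.exp s * Real.exp (t - s) := by rw [← Real.exp_add]; ring_nf
  have h1 : 1 + (t - s) ≤ Real.exp (t - s) := by linarith [Real.add_one_le_exp (t - s)]
  calc Real.exp s - Real.exp t ≤ Real.exp s * (s - t) := by nlinarith [Real.exp_pos s]
    _ ≤ Real.exp c * (s - t) := by gcongr

section LasotaYorke

variable {α H c : ℝ} {A : Bs → ℝ}

theorem IsHolderB.ruelle (hα : 0 < α) (hA : IsHolderB α H A) (hAc : ∀ x, A x ≤ c)
    (hnorm : NormalizedB A) {ψ : Bs → ℝ} {C M : ℝ} (hψ : IsHolderB α C ψ)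
    (hM : ∀ x, |ψ x| ≤ M) :
    IsHolderB α ((1 / 2 : ℝ) ^ α * C + Real.exp c * H * (1 / 2 : ℝ) ^ α * M) (Ruelle A ψ) := by
  intro x y
  set e : ℝ := (1 / 2 : ℝ) ^ α * dB x y ^ α
  have hAcont := hA.continuous hα
  have hψcont := hψ.continuous hα
  have hpt : ∀ a, |Real.exp (A (cons a x)) * ψ (cons a x) - Real.exp (A (cons a y)) * ψ (cons a y)|
      ≤ Real.exp (A (cons a x)) * (C * e) + Real.exp c * (H * e) * M := fun a => by
    have hexp : |Real.exp (A (cons a x)) - Real.exp (A (cons a y))| ≤ Real.exp c * (H * e) :=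
      (abs_exp_sub_exp_le (hAc _) (hAc _)).trans
        (mul_le_mul_of_nonneg_left (hA.abs_sub_cons_le a x y) (Real.exp_pos c).le)
    calc _ = |Real.exp (A (cons a x)) * (ψ (cons a x) - ψ (cons a y))
          + (Real.exp (A (cons a x)) - Real.exp (A (cons a y))) * ψ (cons a y)| := by ring_nf
      _ ≤ Real.exp (A (cons a x)) * |ψ (cons a x) - ψ (cons a y)|
          + |Real.exp (A (cons a x)) - Real.exp (A (cons a y))| * |ψ (cons a y)| := by
        rw [← abs_of_pos (Real.exp_pos (A (cons a x))), ← abs_mul, ← abs_mul,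
          abs_of_pos (Real.exp_pos _)]
        exact abs_add_le _ _
      _ ≤ _ := add_le_add
        (mul_le_mul_of_nonneg_left (hψ.abs_sub_cons_le a x y) (Real.exp_pos _).le)
        (mul_le_mul hexp (hM _) (abs_nonneg _) ((abs_nonneg _).trans hexp))
  have hbound : Integrable
      (fun a => Real.exp (A (cons a x)) * (C * e) + Real.exp c * (H * e) * M) haarC :=
    (integrable_exp_mul_comp_cons hAcont continuous_const x).add (integrable_const _)
  calc |Ruelle A ψ x - Ruelle A ψ y|
      = |∫ a, (Real.exp (A (cons a x)) * ψ (cons a x)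
          - Real.exp (A (cons a y)) * ψ (cons a y)) ∂haarC| := by
        rw [integral_sub (integrable_exp_mul_comp_cons hAcont hψcont x)
          (integrable_exp_mul_comp_cons hAcont hψcont y)]
        rfl
    _ ≤ ∫ a, (Real.exp (A (cons a x)) * (C * e) + Real.exp c * (H * e) * M) ∂haarC :=
        (abs_integral_le_integral_abs).trans (integral_mono_of_nonneg
          (.of_forall fun _ => abs_nonneg _) hbound (.of_forall hpt))
    _ = _ := by
        rw [integral_add (integrable_exp_mul_comp_cons hAcont continuous_const x)
          (integrable_const _), integral_mul_const, hnorm x]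
        simp only [integral_const, probReal_univ, one_smul]
        ring

end LasotaYorke

theorem exists_isHolderB_iterate_ruelle {α H C : ℝ} {A ω : Bs → ℝ} (hα : 0 < α)
    (hA : IsHolderB α H A) (hnorm : NormalizedB A) (hω : IsHolderB α C ω) :
    ∃ S, 0 ≤ S ∧ ∀ n, IsHolderB α S ((Ruelle A)^[n] ω) := by
  obtain ⟨c, hc⟩ := exists_forall_abs_le (hA.continuous hα)
  obtain ⟨M, hM⟩ := exists_forall_abs_le (hω.continuous hα)
  set κ : ℝ := (1 / 2 : ℝ) ^ α
  have hκ : κ < 1 := Real.rpow_lt_one (by norm_num) (by norm_num) hα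
  set K : ℝ := Real.exp c * max H 0 * κ
  have hKM : 0 ≤ K * M := mul_nonneg (by positivity) ((abs_nonneg _).trans (hM fun _ => 0))
  have hS : 0 ≤ K * M / (1 - κ) := div_nonneg hKM (by linarith)
  refine ⟨max C 0 + K * M / (1 - κ), by positivity, fun n => ?_⟩
  induction n with
  | zero => exact hω.mono (by linarith [le_max_left C 0])
  | succ n ih =>
    rw [Function.iterate_succ_apply']
    refine ((hA.mono (le_max_left H 0)).ruelle hα (fun x => (abs_le.1 (hc x)).2) hnorm ih
      fun x => abs_le.2 (iterate_ruelle_mem_Icc (hA.continuous hα) hnorm (hω.continuous hα)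
        (fun y => abs_le.1 (hM y)) n x)).mono ?_
    have hrec : κ * (K * M / (1 - κ)) + K * M = K * M / (1 - κ) := by
      field_simp [show (1 - κ) ≠ 0 by linarith]
      ring
    nlinarith [le_max_right C 0, Real.rpow_nonneg (by norm_num : (0 : ℝ) ≤ 1 / 2) α]

section Doeblin

variable {A : Bs → ℝ} {δ : ℝ}

theorem le_ruelle_of_le_on_closedBall (hA : Continuous A) (hδ : ∀ y, δ ≤ Real.exp (A y))
    {φ : Bs → ℝ} (hφ : Continuous φ) (hφ0 : ∀ y, 0 ≤ φ y) {c : ℝ} (hc : 0 ≤ c) {w : Circ}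
    {η : ℝ} {x : Bs} (h : ∀ a ∈ closedBall w η, c ≤ φ (cons a x)) :
    δ * c * haarC.real (closedBall 0 η) ≤ Ruelle A φ x := by
  have hint := integrable_exp_mul_comp_cons hA hφ x
  rw [← Measure.addHaar_real_closedBall_center haarC w]
  calc δ * c * haarC.real (closedBall w η)
      ≤ ∫ a in closedBall w η, Real.exp (A (cons a x)) * φ (cons a x) ∂haarC :=
        setIntegral_ge_of_const_le_real measurableSet_closedBall (measure_ne_top _ _)
          (fun a ha => mul_le_mul (hδ _) (h a ha) hc (Real.exp_pos _).le) hint.integrableOn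
    _ ≤ Ruelle A φ x :=
        setIntegral_le_integral hint (.of_forall fun _ => mul_nonneg (Real.exp_pos _).le (hφ0 _))

theorem le_iterate_ruelle_of_le_on_cylinder (hA : Continuous A) (hδ : ∀ y, δ ≤ Real.exp (A y))
    (hδ0 : 0 ≤ δ) {η : ℝ} (k : ℕ) (z : Bs) {φ : Bs → ℝ} (hφ : Continuous φ)
    (hφ0 : ∀ y, 0 ≤ φ y) {c : ℝ} (hc : 0 ≤ c)
    (h : ∀ y, (∀ j < k, dist (y j) (z j) ≤ η) → c ≤ φ y) (x : Bs) :
    (δ * haarC.real (closedBall 0 η)) ^ k * c ≤ (Ruelle A)^[k] φ x := by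
  induction k generalizing z φ c with
  | zero => simpa using h x fun _ h => absurd h (Nat.not_lt_zero _)
  | succ k ih =>
    -- `L^{k+1} φ = L^k (L φ)`, and `L φ ≥ δ c q` on the `k`-cylinder around `shift z`.
    have hcyl : ∀ y, (∀ j < k, dist (y j) (shift z j) ≤ η) →
        δ * c * haarC.real (closedBall 0 η) ≤ Ruelle A φ y := fun y hy =>
      le_ruelle_of_le_on_closedBall hA hδ hφ hφ0 hc fun a ha => h _ fun j hj => by
        cases j with
        | zero => exact ha
        | succ j => exact hy j (Nat.succ_lt_succ_iff.1 hj)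
    rw [Function.iterate_succ_apply]
    calc (δ * haarC.real (closedBall 0 η)) ^ (k + 1) * c
        = (δ * haarC.real (closedBall 0 η)) ^ k * (δ * c * haarC.real (closedBall 0 η)) := by
          ring
      _ ≤ _ := ih (shift z) (continuous_ruelle hA hφ) (ruelle_nonneg hφ0)
          (by positivity) hcyl

end Doeblin

theorem tendsto_zero_of_antitone_of_forall_le_one_sub_mul_add {Δ : ℕ → ℝ} (hΔ : Antitone Δ)
    (hΔ0 : ∀ n, 0 ≤ Δ n)
    (h : ∀ ε > 0, ∃ k, ∃ p > 0, ∀ n, Δ (n + k) ≤ (1 - p) * Δ n + p * ε) :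
    Tendsto Δ atTop (𝓝 0) := by
  have hlim := tendsto_atTop_ciInf hΔ ⟨0, Set.forall_mem_range.2 hΔ0⟩
  suffices hinf : ⨅ n, Δ n = 0 by rwa [hinf] at hlim
  refine le_antisymm (le_of_forall_gt_imp_ge_of_dense fun ε hε => ?_) (le_ciInf hΔ0)
  obtain ⟨k, p, hp, hk⟩ := h ε hε
  have : ⨅ n, Δ n ≤ (1 - p) * (⨅ n, Δ n) + p * ε :=
    le_of_tendsto_of_tendsto' (hlim.comp (tendsto_add_atTop_nat k))
      ((hlim.const_mul (1 - p)).add_const (p * ε)) hk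
  nlinarith

def osc (f : Bs → ℝ) : ℝ := (⨆ x, f x) - ⨅ x, f x

section Oscillation

variable {f : Bs → ℝ}

theorem iInf_le_of_continuous (hf : Continuous f) (x : Bs) : ⨅ y, f y ≤ f x :=
  ciInf_le (isCompact_range hf).bddBelow x

theorem le_iSup_of_continuous (hf : Continuous f) (x : Bs) : f x ≤ ⨆ y, f y :=
  le_ciSup (isCompact_range hf).bddAbove x

theorem osc_nonneg (hf : Continuous f) : 0 ≤ osc f :=
  sub_nonneg.2 ((iInf_le_of_continuous hf 0).trans (le_iSup_of_continuous hf 0))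

theorem dist_integral_le_osc (hf : Continuous f) (m : Measure Bs) [IsProbabilityMeasure m]
    (x : Bs) : dist (∫ y, f y ∂m) (f x) ≤ osc f := by
  have hint : Integrable f m := hf.integrable_of_hasCompactSupport (.of_compactSpace _)
  have hle : ∫ y, f y ∂m ≤ ⨆ y, f y := by
    simpa using integral_mono hint (integrable_const _) (le_iSup_of_continuous hf)
  have hge : ⨅ y, f y ≤ ∫ y, f y ∂m := by
    simpa using integral_mono (integrable_const _) hint (iInf_le_of_continuous hf)
  rw [Real.dist_eq, abs_le, osc]
  constructor <;> linarith [iInf_le_of_continuous hf x, le_iSup_of_continuous hf x]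

end Oscillation

section Contraction

variable {A : Bs → ℝ} {ψ : Bs → ℝ}

theorem iterate_ruelle_mem_Icc_iInf_iSup (hA : Continuous A) (hnorm : NormalizedB A)
    (hψ : Continuous ψ) (n : ℕ) (x : Bs) :
    (Ruelle A)^[n] ψ x ∈ Set.Icc (⨅ y, ψ y) (⨆ y, ψ y) :=
  iterate_ruelle_mem_Icc hA hnorm hψ
    (fun y => ⟨iInf_le_of_continuous hψ y, le_iSup_of_continuous hψ y⟩) n x

theorem osc_ruelle_le (hA : Continuous A) (hnorm : NormalizedB A) (hψ : Continuous ψ) :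
    osc (Ruelle A ψ) ≤ osc ψ :=
  sub_le_sub (ciSup_le fun x => (iterate_ruelle_mem_Icc_iInf_iSup hA hnorm hψ 1 x).2)
    (le_ciInf fun x => (iterate_ruelle_mem_Icc_iInf_iSup hA hnorm hψ 1 x).1)

theorem osc_iterate_ruelle_le {α δ C : ℝ} (hα : 0 ≤ α) (hA : Continuous A)
    (hnorm : NormalizedB A) (hδ : ∀ y, δ ≤ Real.exp (A y)) (hδ0 : 0 ≤ δ) (hψ : Continuous ψ)
    (hC : 0 ≤ C) (hψC : IsHolderB α C ψ) {k : ℕ} {η r : ℝ}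
    (hcyl : ∀ y z : Bs, (∀ j < k, dist (y j) (z j) ≤ η) → dB y z ≤ r) :
    osc ((Ruelle A)^[k] ψ) ≤ (1 - (δ * haarC.real (closedBall 0 η)) ^ k) * osc ψ
      + (δ * haarC.real (closedBall 0 η)) ^ k * (C * r ^ α) := by
  set p := (δ * haarC.real (closedBall 0 η)) ^ k
  set s := ⨆ y, ψ y
  have hp : 0 ≤ p := by positivity
  have hpoint : ∀ x z, (Ruelle A)^[k] ψ x ≤ s - p * (s - ψ z - C * r ^ α) := fun x z => by
    have hφ0 : ∀ y, 0 ≤ s - ψ y := fun y => sub_nonneg.2 (le_iSup_of_continuous hψ y)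
    have hcz : ∀ y, (∀ j < k, dist (y j) (z j) ≤ η) → max (s - ψ z - C * r ^ α) 0 ≤ s - ψ y :=
      fun y hy => by
        have hvar : ψ y - ψ z ≤ C * r ^ α := (le_abs_self _).trans ((hψC y z).trans
          (mul_le_mul_of_nonneg_left (Real.rpow_le_rpow (dB_nonneg y z) (hcyl y z hy) hα) hC))
        exact max_le (by linarith) (hφ0 y)
    have := le_iterate_ruelle_of_le_on_cylinder hA hδ hδ0 k z (φ := fun y => s - ψ y)
      (continuous_const.sub hψ) hφ0 (le_max_right _ _) hcz x
    rw [iterate_ruelle_const_sub hA hnorm hψ] at this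
    nlinarith [le_max_left (s - ψ z - C * r ^ α) 0]
  have hsup : ⨆ x, (Ruelle A)^[k] ψ x ≤ (1 - p) * s + p * (⨅ z, ψ z) + p * (C * r ^ α) := by
    refine ciSup_le fun x => ?_
    have : (Ruelle A)^[k] ψ x - (1 - p) * s - p * (C * r ^ α) ≤ p * ⨅ z, ψ z := by
      rw [Real.mul_iInf_of_nonneg hp]
      exact le_ciInf fun z => by linarith [hpoint x z]
    linarith
  have hinf : ⨅ z, ψ z ≤ ⨅ x, (Ruelle A)^[k] ψ x :=
    le_ciInf fun x => (iterate_ruelle_mem_Icc_iInf_iSup hA hnorm hψ k x).1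
  rw [osc, osc]
  linarith

end Contraction

theorem tendsto_osc_iterate_ruelle {α H C : ℝ} {A ω : Bs → ℝ} (hα : 0 < α)
    (hA : IsHolderB α H A) (hnorm : NormalizedB A) (hω : IsHolderB α C ω) :
    Tendsto (fun n => osc ((Ruelle A)^[n] ω)) atTop (𝓝 0) := by
  have hAc := hA.continuous hα
  have hωc := hω.continuous hα
  obtain ⟨S, hS0, hS⟩ := exists_isHolderB_iterate_ruelle hα hA hnorm hω
  obtain ⟨c, hc⟩ := exists_forall_abs_le hAc
  have hδ : ∀ y, Real.exp (-c) ≤ Real.exp (A y) := fun y =>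
    Real.exp_le_exp.2 (neg_le_of_abs_le (hc y))
  have hanti : Antitone fun n => osc ((Ruelle A)^[n] ω) := antitone_nat_of_succ_le fun n => by
    rw [Function.iterate_succ_apply']
    exact osc_ruelle_le hAc hnorm (continuous_iterate_ruelle hAc hωc n)
  refine tendsto_zero_of_antitone_of_forall_le_one_sub_mul_add hanti
    (fun n => osc_nonneg (continuous_iterate_ruelle hAc hωc n)) fun ε hε => ?_
  have hsmall : Tendsto (fun r : ℝ => S * r ^ α) (𝓝[>] 0) (𝓝 0) := by
    simpa [Real.zero_rpow hα.ne'] using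
      ((Real.continuousAt_rpow_const 0 α (Or.inr hα.le)).tendsto.mono_left
        nhdsWithin_le_nhds).const_mul S
  obtain ⟨r, hr, hr0⟩ := ((hsmall.eventually (gt_mem_nhds hε)).and self_mem_nhdsWithin).exists
  obtain ⟨k, η, hη, hcyl⟩ := exists_dB_le_of_forall_lt_dist_le hr0
  have hball : 0 < haarC.real (closedBall 0 η) :=
    ENNReal.toReal_pos (measure_closedBall_pos haarC 0 hη).ne' (measure_ne_top _ _)
  refine ⟨k, (Real.exp (-c) * haarC.real (closedBall 0 η)) ^ k, by positivity, fun n => ?_⟩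
  rw [add_comm, Function.iterate_add_apply]
  refine (osc_iterate_ruelle_le hα.le hAc hnorm hδ (Real.exp_pos _).le
    (continuous_iterate_ruelle hAc hωc n) hS0 (hS n) hcyl).trans ?_
  gcongr

theorem iterates_tendsto_uniformly_general (α H : ℝ) (hα0 : 0 < α)
    (A : Bs → ℝ) (hA : IsHolderB α H A) (hnorm : NormalizedB A)
    (m : Measure Bs) (hm : IsProbabilityMeasure m) (hfix : FixedDual A m)
    (ω : Bs → ℝ) (Cω : ℝ) (hω : IsHolderB α Cω ω) :
    TendstoUniformly (fun n x => (Ruelle A)^[n] ω x) (fun _ => ∫ x, ω x ∂m) atTop := by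
  have hAc := hA.continuous hα0
  have hωc := hω.continuous hα0
  rw [Metric.tendstoUniformly_iff]
  intro ε hε
  filter_upwards [(tendsto_osc_iterate_ruelle hα0 hA hnorm hω).eventually (gt_mem_nhds hε)]
    with n hn x
  rw [← integral_iterate_ruelle hAc hfix hωc n]
  exact (dist_integral_le_osc (continuous_iterate_ruelle hAc hωc n) m x).trans_lt hn

/-- for a normalized α-Hölder potential, the iterates `L_Ā^n ω` of any
α-Hölder function `ω` converge uniformly to the constant `∫ ω dm`. -/
theorem iterates_tendsto_uniformly (α H : ℝ) (hα0 : 0 < α) (hα1 : α ≤ 1)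
    (A : Bs → ℝ) (hA : IsHolderB α H A) (hnorm : NormalizedB A)
    (m : Measure Bs) (hm : IsProbabilityMeasure m) (hfix : FixedDual A m)
    (hmuniq : ∀ m' : Measure Bs, IsProbabilityMeasure m' → FixedDual A m' → m' = m)
    (ω : Bs → ℝ) (Cω : ℝ) (hω : IsHolderB α Cω ω) :
    TendstoUniformly (fun n x => (Ruelle A)^[n] ω x) (fun _ => ∫ x, ω x ∂m) atTop :=
  iterates_tendsto_uniformly_general α H hα0 A hA hnorm m hm hfix ω Cω hω
end
end
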